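/- Almost surely (in the Gaussian randomness of a₁, …, a_m), the second radial derivative satisfies ∂_{ρρ} f(ρ û) > 0 for every ρ > 0 and every unit vector û ∈ S^{n−1}. Moreover, for any fixed constants 0 < c₁ < c₂ < ∞ there exists C₀ > 0 (depending on β, c₁, c₂) such that if m ≥ C₀·n, then with probability at least 1 − C e^{−c m} (for positive constants c, C of the same type) one has ∂_{ρρ} f(ρ û) ≥ α > 0 simultaneously for all c₁ ≤ ρ ≤ c₂ and all û ∈ S^{n−1}, where α > 0 is a constant depending only on c₁, c₂ and β. -/

import Mathlib

open MeasureTheory ProbabilityTheory Real Filter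

noncomputable section

/-- The standard Gaussian measure `N(0, I_n)` on `ℝⁿ`. -/
def stdGaussianVec (n : ℕ) : Measure (EuclideanSpace ℝ (Fin n)) :=
  (Measure.pi fun _ : Fin n => gaussianReal 0 1).map
    (MeasurableEquiv.toLp 2 (Fin n → ℝ))

/-- The joint law of `m` i.i.d. standard Gaussian random vectors in `ℝⁿ`. -/
def samples (n m : ℕ) : Measure (Fin m → EuclideanSpace ℝ (Fin n)) :=
  Measure.pi fun _ : Fin m => stdGaussianVec n

/-- The first standard basis vector of `ℝⁿ`. -/
def e1 (n : ℕ) (hn : 0 < n) : EuclideanSpace ℝ (Fin n) :=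
  EuclideanSpace.single ⟨0, hn⟩ 1

/-- The PAM1 empirical loss
`f(u) = (1/m) ∑_j (√(β‖u‖² + ⟨a_j,u⟩²) − √(β‖u‖² + ⟨a_j,x⟩²))²`. -/
def pam1 (β : ℝ) {n m : ℕ} (a : Fin m → EuclideanSpace ℝ (Fin n))
    (x u : EuclideanSpace ℝ (Fin n)) : ℝ :=
  (1 / (m : ℝ)) * ∑ j : Fin m,
    (Real.sqrt (β * ‖u‖ ^ 2 + (inner ℝ (a j) u : ℝ) ^ 2)
      - Real.sqrt (β * ‖u‖ ^ 2 + (inner ℝ (a j) x : ℝ) ^ 2)) ^ 2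

/-- The Hessian quadratic form `ξᵀ ∇²f(u) ξ`. -/
def hess {n : ℕ} (f : EuclideanSpace ℝ (Fin n) → ℝ)
    (u ξ : EuclideanSpace ℝ (Fin n)) : ℝ :=
  iteratedFDeriv ℝ 2 f u ![ξ, ξ]

end

/-!
Along a ray, `f (ρ • û) = (1/m) ∑ⱼ (sⱼ ρ - √(βρ² + tⱼ²))²` with `sⱼ = √(β + ⟨aⱼ, û⟩²)` and
`tⱼ = ⟨aⱼ, e₁⟩`, and the second derivative of each summand is at least `2β (tⱼ² / (βρ² + tⱼ²))³`
by a sum-of-squares identity; this bound no longer involves `û`. Almost surely `t₁ ≠ 0`, which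
gives positivity. For the uniform bound, the Gaussian density is below `1/2`, so
`P(|tⱼ| < 1/10) ≤ 1/10`, and a union bound over subsets of size `⌊m/2⌋ + 1` shows that with
probability at least `1 - e^{-m/4}` at least half of the `tⱼ²` are `≥ 1/100`; on `ρ ≤ c₂` each of
these contributes at least `(2β/m) (1/100 / (βc₂² + 1/100))³` to the lower bound.
-/

open scoped NNReal ENNReal Topology

section SqrtQuadratic

variable {β t : ℝ}

theorem hasDerivAt_sqrt_quadratic {r : ℝ} (h : 0 < β * r ^ 2 + t ^ 2) :
    HasDerivAt (fun r => √(β * r ^ 2 + t ^ 2)) (β * r / √(β * r ^ 2 + t ^ 2)) r := by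
  have hq : √(β * r ^ 2 + t ^ 2) ≠ 0 := (Real.sqrt_pos.2 h).ne'
  refine ((((hasDerivAt_pow 2 r).const_mul β).add_const (t ^ 2)).sqrt h.ne').congr_deriv ?_
  field_simp
  norm_num

theorem hasDerivAt_div_sqrt_quadratic {r : ℝ} (h : 0 < β * r ^ 2 + t ^ 2) :
    HasDerivAt (fun r => β * r / √(β * r ^ 2 + t ^ 2))
      (β * t ^ 2 / √(β * r ^ 2 + t ^ 2) ^ 3) r := by
  have hq : 0 < √(β * r ^ 2 + t ^ 2) := Real.sqrt_pos.2 h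
  have hq2 : √(β * r ^ 2 + t ^ 2) ^ 2 = β * r ^ 2 + t ^ 2 := Real.sq_sqrt h.le
  refine (((hasDerivAt_id r).const_mul β).fun_div (hasDerivAt_sqrt_quadratic h)
    hq.ne').congr_deriv ?_
  simp only [id, mul_one]
  field_simp
  linear_combination β * hq2

theorem hasDerivAt_sq_sub_sqrt_quadratic (s : ℝ) {r : ℝ} (h : 0 < β * r ^ 2 + t ^ 2) :
    HasDerivAt (fun r => (s * r - √(β * r ^ 2 + t ^ 2)) ^ 2)
      (2 * (s * r - √(β * r ^ 2 + t ^ 2)) * (s - β * r / √(β * r ^ 2 + t ^ 2))) r := by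
  refine ((((hasDerivAt_id r).const_mul s).fun_sub
    (hasDerivAt_sqrt_quadratic h)).fun_pow 2).congr_deriv ?_
  simp only [id, mul_one]
  ring

theorem hasDerivAt_deriv_sq_sub_sqrt_quadratic (s : ℝ) {r : ℝ} (h : 0 < β * r ^ 2 + t ^ 2) :
    HasDerivAt
      (fun r => 2 * (s * r - √(β * r ^ 2 + t ^ 2)) * (s - β * r / √(β * r ^ 2 + t ^ 2)))
      (2 * ((s - β * r / √(β * r ^ 2 + t ^ 2)) ^ 2
        - (s * r - √(β * r ^ 2 + t ^ 2)) * (β * t ^ 2 / √(β * r ^ 2 + t ^ 2) ^ 3))) r := by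
  have hu := ((hasDerivAt_id r).const_mul s).fun_sub (hasDerivAt_sqrt_quadratic h)
  have hv := (hasDerivAt_const r s).fun_sub (hasDerivAt_div_sqrt_quadratic h)
  refine ((hu.const_mul 2).fun_mul hv).congr_deriv ?_
  simp only [id, mul_one]
  ring

-- With `q² = βρ² + t²`, `q⁶` times the gap is `(s q³ - β ρ q² - β ρ t² / 2)² + (3/4) β² ρ² t⁴`.
theorem cube_le_deriv_deriv_sq_sub_sqrt_quadratic (s : ℝ) {ρ : ℝ} (h : 0 < β * ρ ^ 2 + t ^ 2) :
    β * (t ^ 2 / (β * ρ ^ 2 + t ^ 2)) ^ 3 ≤ (s - β * ρ / √(β * ρ ^ 2 + t ^ 2)) ^ 2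
      - (s * ρ - √(β * ρ ^ 2 + t ^ 2)) * (β * t ^ 2 / √(β * ρ ^ 2 + t ^ 2) ^ 3) := by
  set q := √(β * ρ ^ 2 + t ^ 2)
  have hq : 0 < q := Real.sqrt_pos.2 h
  have hq2 : q ^ 2 = β * ρ ^ 2 + t ^ 2 := Real.sq_sqrt h.le
  rw [← hq2, ← sub_nonneg]
  have key : ((s - β * ρ / q) ^ 2 - (s * ρ - q) * (β * t ^ 2 / q ^ 3) - β * (t ^ 2 / q ^ 2) ^ 3)
      * q ^ 6 = (s * q ^ 3 - β * ρ * q ^ 2 - β * ρ * t ^ 2 / 2) ^ 2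
        + 3 / 4 * β ^ 2 * ρ ^ 2 * t ^ 4 := by
    field_simp
    linear_combination 16 * β * t ^ 2 * (q ^ 2 + t ^ 2) * hq2
  have : 0 ≤ (s * q ^ 3 - β * ρ * q ^ 2 - β * ρ * t ^ 2 / 2) ^ 2
      + 3 / 4 * β ^ 2 * ρ ^ 2 * t ^ 4 := by
    positivity
  rw [← key] at this
  exact nonneg_of_mul_nonneg_left this (by positivity)

end SqrtQuadratic

theorem deriv_deriv_eq_of_eventually_hasDerivAt {f f' : ℝ → ℝ} {f'' ρ : ℝ}
    (hf : ∀ᶠ r in 𝓝 ρ, HasDerivAt f (f' r) r) (hf' : HasDerivAt f' f'' ρ) :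
    deriv (deriv f) ρ = f'' := by
  rw [Filter.EventuallyEq.deriv_eq (show deriv f =ᶠ[𝓝 ρ] f' from hf.mono fun r hr => hr.deriv)]
  exact hf'.deriv

section Radial

variable {β : ℝ} {n m : ℕ} (a : Fin m → EuclideanSpace ℝ (Fin n)) (x : EuclideanSpace ℝ (Fin n))
  {uhat : EuclideanSpace ℝ (Fin n)}

theorem pam1_smul_of_norm_eq_one (hu : ‖uhat‖ = 1) {r : ℝ} (hr : 0 ≤ r) :
    pam1 β a x (r • uhat) = 1 / m * ∑ j, (√(β + inner ℝ (a j) uhat ^ 2) * r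
      - √(β * r ^ 2 + inner ℝ (a j) x ^ 2)) ^ 2 := by
  simp only [pam1, norm_smul, hu, mul_one, Real.norm_eq_abs, sq_abs, real_inner_smul_right]
  congr 2 with j
  rw [show β * r ^ 2 + (r * inner ℝ (a j) uhat) ^ 2 = (β + inner ℝ (a j) uhat ^ 2) * r ^ 2 by
    ring, Real.sqrt_mul' _ (sq_nonneg r), Real.sqrt_sq hr]

theorem pam1_second_radial_deriv_ge (hβ : 0 < β) (hu : ‖uhat‖ = 1) {ρ : ℝ} (hρ : 0 < ρ) :
    2 * β / m * ∑ j, (inner ℝ (a j) x ^ 2 / (β * ρ ^ 2 + inner ℝ (a j) x ^ 2)) ^ 3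
      ≤ deriv (deriv fun r => pam1 β a x (r • uhat)) ρ := by
  set s : Fin m → ℝ := fun j => √(β + inner ℝ (a j) uhat ^ 2)
  have hpos : ∀ r, 0 < r → ∀ j, 0 < β * r ^ 2 + inner ℝ (a j) x ^ 2 := fun r hr j => by
    positivity
  have hpam : (fun r => pam1 β a x (r • uhat)) =ᶠ[𝓝 ρ]
      fun r => 1 / m * ∑ j, (s j * r - √(β * r ^ 2 + inner ℝ (a j) x ^ 2)) ^ 2 := by
    filter_upwards [Ioi_mem_nhds hρ] with r hr
    exact pam1_smul_of_norm_eq_one a x hu hr.le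
  rw [hpam.deriv.deriv_eq, deriv_deriv_eq_of_eventually_hasDerivAt
    (Filter.eventually_of_mem (Ioi_mem_nhds hρ) fun r hr => (HasDerivAt.fun_sum fun j _ =>
      hasDerivAt_sq_sub_sqrt_quadratic (s j) (hpos r hr j)).const_mul _)
    ((HasDerivAt.fun_sum fun j _ =>
      hasDerivAt_deriv_sq_sub_sqrt_quadratic (s j) (hpos ρ hρ j)).const_mul _),
    show 2 * β / m = 1 / m * (2 * β) by ring, mul_assoc, Finset.mul_sum]
  refine mul_le_mul_of_nonneg_left (Finset.sum_le_sum fun j _ => ?_) (by positivity)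
  linarith [cube_le_deriv_deriv_sq_sub_sqrt_quadratic (s j) (hpos ρ hρ j)]

end Radial

theorem div_add_le_div_add {b b' τ t : ℝ} (hb' : 0 ≤ b') (hb : b' ≤ b) (hτ : 0 < τ)
    (ht : τ ≤ t) : τ / (b + τ) ≤ t / (b' + t) := by
  rw [div_le_div_iff₀ (by linarith) (by linarith)]
  nlinarith

theorem cube_sum_ge_of_few_small {β τ ρ c : ℝ} {m : ℕ} (hβ : 0 ≤ β) (hτ : 0 < τ)
    (hρ : ρ ^ 2 ≤ c ^ 2) (hm : 0 < m) (t : Fin m → ℝ)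
    (hfew : 2 * {j | t j ^ 2 < τ}.ncard ≤ m) :
    β * (τ / (β * c ^ 2 + τ)) ^ 3
      ≤ 2 * β / m * ∑ j, (t j ^ 2 / (β * ρ ^ 2 + t j ^ 2)) ^ 3 := by
  classical
  set large := Finset.univ.filter fun j => τ ≤ t j ^ 2
  have hlarge : (m : ℝ) ≤ 2 * large.card := by
    have hsplit := Set.ncard_add_ncard_compl {j | t j ^ 2 < τ}
    have hcompl : {j | t j ^ 2 < τ}ᶜ = (large : Set (Fin m)) := by ext j; simp [large]
    rw [hcompl, Set.ncard_coe_finset, Nat.card_eq_fintype_card, Fintype.card_fin] at hsplit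
    exact_mod_cast (by omega : m ≤ 2 * large.card)
  have hsum : (large.card : ℝ) * (τ / (β * c ^ 2 + τ)) ^ 3
      ≤ ∑ j, (t j ^ 2 / (β * ρ ^ 2 + t j ^ 2)) ^ 3 := by
    rw [← nsmul_eq_mul]
    refine (Finset.card_nsmul_le_sum _ _ _ fun j hj => ?_).trans
      (Finset.sum_le_sum_of_subset_of_nonneg (Finset.subset_univ _) fun j _ _ => by positivity)
    exact pow_le_pow_left₀ (by positivity)
      (div_add_le_div_add (by positivity) (by gcongr) hτ (Finset.mem_filter.1 hj).2) 3
  have hm' : (0 : ℝ) < m := by exact_mod_cast hm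
  calc β * (τ / (β * c ^ 2 + τ)) ^ 3
      = 2 * β / m * (m / 2 * (τ / (β * c ^ 2 + τ)) ^ 3) := by field_simp
    _ ≤ 2 * β / m * (large.card * (τ / (β * c ^ 2 + τ)) ^ 3) := by gcongr; linarith
    _ ≤ _ := by gcongr

theorem choose_mul_pow_le_exp {m k : ℕ} (hk : m ≤ 2 * k) :
    (m.choose k : ℝ) * (1 / 10) ^ k ≤ exp (-(1 / 4) * m) := by
  refine le_of_pow_le_pow_left₀ two_ne_zero (exp_pos _).le ?_
  calc ((m.choose k : ℝ) * (1 / 10) ^ k) ^ 2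
      ≤ ((2 : ℝ) ^ m * (1 / 10) ^ k) ^ 2 := by
        gcongr
        exact_mod_cast Nat.choose_le_two_pow m k
    _ = 4 ^ m * (1 / 10) ^ (2 * k) := by
        rw [mul_pow, ← pow_mul, ← pow_mul, mul_comm k, pow_mul', (by norm_num : (2 : ℝ) ^ 2 = 4)]
    _ ≤ 4 ^ m * (1 / 10) ^ m :=
        mul_le_mul_of_nonneg_left (pow_le_pow_of_le_one (by norm_num) (by norm_num) hk)
          (by positivity)
    _ = (2 / 5) ^ m := by rw [← mul_pow]; norm_num
    _ ≤ exp (-(1 / 2)) ^ m := by gcongr; linarith [add_one_le_exp (-(1 / 2))]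
    _ = exp (-(1 / 4) * m) ^ 2 := by rw [← exp_nat_mul, ← exp_nat_mul]; ring_nf

theorem measure_pi_le_choose_mul_pow {ι α : Type*} [Fintype ι] [MeasurableSpace α]
    (μ : Measure α) [IsProbabilityMeasure μ] (B : Set α) (k : ℕ) :
    Measure.pi (fun _ : ι => μ) {a | k ≤ {j | a j ∈ B}.ncard}
      ≤ (Fintype.card ι).choose k * μ B ^ k := by
  classical
  calc Measure.pi (fun _ : ι => μ) {a | k ≤ {j | a j ∈ B}.ncard}
      ≤ Measure.pi (fun _ : ι => μ)
          (⋃ J ∈ (Finset.univ : Finset ι).powersetCard k, (J : Set ι).pi fun _ => B) := by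
        refine measure_mono fun a ha => ?_
        obtain ⟨J, hJB, hJk⟩ := Set.exists_subset_card_eq ha
        refine Set.mem_iUnion₂.2 ⟨J.toFinset, ?_, ?_⟩
        · exact Finset.mem_powersetCard.2
            ⟨Finset.subset_univ _, by rwa [Set.ncard_eq_toFinset_card'] at hJk⟩
        · exact fun j hj => hJB (by simpa using hj)
    _ ≤ ∑ J ∈ (Finset.univ : Finset ι).powersetCard k,
          Measure.pi (fun _ : ι => μ) ((J : Set ι).pi fun _ => B) :=
        measure_biUnion_finset_le _ _
    _ = ∑ J ∈ (Finset.univ : Finset ι).powersetCard k, μ B ^ k :=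
        Finset.sum_congr rfl fun J hJ => by
          rw [Measure.pi_pi_finset, Finset.prod_const, (Finset.mem_powersetCard.1 hJ).2]
    _ = (Fintype.card ι).choose k * μ B ^ k := by
        rw [Finset.sum_const, Finset.card_powersetCard, Finset.card_univ, nsmul_eq_mul]

theorem gaussianPDFReal_le_inv_sqrt (μ : ℝ) (v : ℝ≥0) (x : ℝ) :
    gaussianPDFReal μ v x ≤ (√(2 * π * v))⁻¹ := by
  rw [gaussianPDFReal]
  refine mul_le_of_le_one_right (by positivity) (exp_le_one_iff.2 ?_)
  exact div_nonpos_of_nonpos_of_nonneg (neg_nonpos.2 (sq_nonneg _)) (by positivity)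

theorem gaussianReal_le_mul_volume (μ : ℝ) {v : ℝ≥0} (hv : v ≠ 0) (s : Set ℝ) :
    gaussianReal μ v s ≤ ENNReal.ofReal (√(2 * π * v))⁻¹ * volume s := by
  rw [gaussianReal_apply μ hv, ← setLIntegral_const]
  exact lintegral_mono fun x => ENNReal.ofReal_le_ofReal (gaussianPDFReal_le_inv_sqrt μ v x)

theorem gaussianReal_Ioo_le {ε : ℝ} (hε : 0 ≤ ε) :
    gaussianReal 0 1 (Set.Ioo (-ε) ε) ≤ ENNReal.ofReal ε := by
  refine (gaussianReal_le_mul_volume 0 one_ne_zero _).trans ?_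
  rw [Real.volume_Ioo, ← ENNReal.ofReal_mul (by positivity)]
  refine ENNReal.ofReal_le_ofReal ?_
  have h2 : 2 ≤ √(2 * π * (1 : ℝ≥0)) := by
    rw [NNReal.coe_one, mul_one, Real.le_sqrt zero_le_two (by positivity)]
    nlinarith [pi_gt_three]
  calc (√(2 * π * (1 : ℝ≥0)))⁻¹ * (ε - -ε) ≤ 2⁻¹ * (2 * ε) := by
        rw [sub_neg_eq_add, ← two_mul]
        gcongr
    _ = ε := by ring

instance (n : ℕ) : IsProbabilityMeasure (stdGaussianVec n) :=
  Measure.isProbabilityMeasure_map (MeasurableEquiv.measurable _).aemeasurable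

instance (n m : ℕ) : IsProbabilityMeasure (samples n m) := by
  unfold samples
  infer_instance

theorem measurePreserving_stdGaussianVec_inner_e1 {n : ℕ} (hn : 0 < n) :
    MeasurePreserving (fun v => inner ℝ v (e1 n hn)) (stdGaussianVec n) (gaussianReal 0 1) := by
  have hinner (v : EuclideanSpace ℝ (Fin n)) : inner ℝ v (e1 n hn) = v ⟨0, hn⟩ := by
    simp [e1, EuclideanSpace.inner_single_right]
  simp_rw [hinner]
  refine ⟨by fun_prop, ?_⟩
  rw [stdGaussianVec, Measure.map_map (by fun_prop) (by fun_prop)]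
  exact (measurePreserving_eval _ _).map_eq

theorem ae_inner_e1_ne_zero {n m : ℕ} (hn : 0 < n) (j : Fin m) :
    ∀ᵐ a ∂samples n m, inner ℝ (a j) (e1 n hn) ≠ 0 := by
  have := nullSingletonClass_gaussianReal (μ := 0) one_ne_zero
  exact ((measurePreserving_stdGaussianVec_inner_e1 hn).comp
    (measurePreserving_eval _ j)).quasiMeasurePreserving.ae
      (compl_mem_ae_iff.2 (measure_singleton 0))

theorem stdGaussianVec_sq_inner_e1_lt_le {n : ℕ} (hn : 0 < n) :
    stdGaussianVec n {v | inner ℝ v (e1 n hn) ^ 2 < 1 / 100} ≤ ENNReal.ofReal (1 / 10) := by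
  have hsub : {x : ℝ | x ^ 2 < 1 / 100} ⊆ Set.Ioo (-(1 / 10)) (1 / 10) := fun x hx => by
    constructor <;> nlinarith [hx.out]
  calc stdGaussianVec n {v | inner ℝ v (e1 n hn) ^ 2 < 1 / 100}
      = gaussianReal 0 1 {x | x ^ 2 < 1 / 100} :=
        (measurePreserving_stdGaussianVec_inner_e1 hn).measure_preimage
          (s := {x | x ^ 2 < 1 / 100})
          (measurableSet_lt (by fun_prop) measurable_const).nullMeasurableSet
    _ ≤ gaussianReal 0 1 (Set.Ioo (-(1 / 10)) (1 / 10)) := measure_mono hsub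
    _ ≤ ENNReal.ofReal (1 / 10) := gaussianReal_Ioo_le (by norm_num)

theorem samples_half_small_inner_e1_le {n : ℕ} (hn : 0 < n) (m : ℕ) :
    samples n m {a | m / 2 + 1 ≤ {j | inner ℝ (a j) (e1 n hn) ^ 2 < 1 / 100}.ncard}
      ≤ ENNReal.ofReal (exp (-(1 / 4) * m)) := by
  have hcount := measure_pi_le_choose_mul_pow (ι := Fin m) (stdGaussianVec n)
    {v | inner ℝ v (e1 n hn) ^ 2 < 1 / 100} (m / 2 + 1)
  rw [Fintype.card_fin] at hcount
  calc samples n m {a | m / 2 + 1 ≤ {j | inner ℝ (a j) (e1 n hn) ^ 2 < 1 / 100}.ncard}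
      ≤ m.choose (m / 2 + 1)
          * stdGaussianVec n {v | inner ℝ v (e1 n hn) ^ 2 < 1 / 100} ^ (m / 2 + 1) := hcount
    _ ≤ m.choose (m / 2 + 1) * ENNReal.ofReal (1 / 10) ^ (m / 2 + 1) := by
        gcongr
        exact stdGaussianVec_sq_inner_e1_lt_le hn
    _ = ENNReal.ofReal (m.choose (m / 2 + 1) * (1 / 10) ^ (m / 2 + 1)) := by
        rw [ENNReal.ofReal_mul (by positivity), ENNReal.ofReal_pow (by norm_num),
          ENNReal.ofReal_natCast]
    _ ≤ ENNReal.ofReal (exp (-(1 / 4) * m)) :=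
        ENNReal.ofReal_le_ofReal (choose_mul_pow_le_exp (by omega))

theorem ofReal_one_sub_le_of_compl_subset {Ω : Type*} [MeasurableSpace Ω] {μ : Measure Ω}
    [IsProbabilityMeasure μ] {s t : Set Ω} {δ : ℝ} (hδ : 0 ≤ δ) (hst : sᶜ ⊆ t)
    (ht : μ t ≤ ENNReal.ofReal δ) : ENNReal.ofReal (1 - δ) ≤ μ s := by
  rw [ENNReal.ofReal_sub _ hδ, ENNReal.ofReal_one, tsub_le_iff_right, ← measure_univ (μ := μ)]
  exact (measure_univ_le_add_compl s).trans (by gcongr; exact (measure_mono hst).trans ht)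

theorem pam1_ae_second_radial_deriv_pos {β : ℝ} (hβ : 0 < β) {n m : ℕ} (hn : 0 < n)
    (hm : 0 < m) :
    ∀ᵐ a ∂samples n m, ∀ ρ : ℝ, 0 < ρ → ∀ uhat : EuclideanSpace ℝ (Fin n), ‖uhat‖ = 1 →
      0 < deriv (deriv fun r : ℝ => pam1 β a (e1 n hn) (r • uhat)) ρ := by
  filter_upwards [ae_inner_e1_ne_zero hn ⟨0, hm⟩] with a ha ρ hρ uhat hu
  refine lt_of_lt_of_le ?_ (pam1_second_radial_deriv_ge a _ hβ hu hρ)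
  refine mul_pos (by positivity) (Finset.sum_pos' (fun j _ => by positivity)
    ⟨⟨0, hm⟩, Finset.mem_univ _, by positivity⟩)

theorem pam1_second_radial_deriv_ge_whp {β c₁ c₂ : ℝ} (hβ : 0 < β) (hc₁ : 0 < c₁) {n m : ℕ}
    (hn : 0 < n) (hm : 0 < m) :
    ENNReal.ofReal (1 - exp (-(1 / 4) * m)) ≤ samples n m {a | ∀ ρ : ℝ, c₁ ≤ ρ → ρ ≤ c₂ →
      ∀ uhat : EuclideanSpace ℝ (Fin n), ‖uhat‖ = 1 →
        β * (1 / 100 / (β * c₂ ^ 2 + 1 / 100)) ^ 3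
          ≤ deriv (deriv fun r : ℝ => pam1 β a (e1 n hn) (r • uhat)) ρ} := by
  refine ofReal_one_sub_le_of_compl_subset (exp_pos _).le (fun a ha => ?_)
    (samples_half_small_inner_e1_le hn m)
  by_contra hfew
  refine ha fun ρ hρ₁ hρ₂ uhat hu => ?_
  have hρ : 0 < ρ := hc₁.trans_le hρ₁
  refine (cube_sum_ge_of_few_small hβ.le (by norm_num) ?_ hm _ ?_).trans
    (pam1_second_radial_deriv_ge a _ hβ hu hρ)
  · exact pow_le_pow_left₀ hρ.le hρ₂ 2
  · simp only [Set.mem_ofPred_eq, not_le] at hfew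
    omega

/-- the second radial derivative of the PAM1 loss is almost surely
positive for all `ρ > 0`, and uniformly bounded below on `c₁ ≤ ρ ≤ c₂`
with high probability. -/
theorem pam1_second_radial_deriv_pos (β : ℝ) (hβ : 0 < β) :
    (∀ (n m : ℕ) (hn : 0 < n), 0 < m →
      ∀ᵐ a ∂(samples n m), ∀ ρ : ℝ, 0 < ρ →
        ∀ uhat : EuclideanSpace ℝ (Fin n), ‖uhat‖ = 1 →
          0 < deriv (deriv (fun r : ℝ => pam1 β a (e1 n hn) (r • uhat))) ρ) ∧
    (∀ c₁ c₂ : ℝ, 0 < c₁ → c₁ < c₂ →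
      ∃ C₀ α c C : ℝ, 0 < C₀ ∧ 0 < α ∧ 0 < c ∧ 0 < C ∧
        ∀ (n m : ℕ) (hn : 0 < n), 0 < m → (m : ℝ) ≥ C₀ * n →
          samples n m {a : Fin m → EuclideanSpace ℝ (Fin n) |
              ∀ ρ : ℝ, c₁ ≤ ρ → ρ ≤ c₂ →
                ∀ uhat : EuclideanSpace ℝ (Fin n), ‖uhat‖ = 1 →
                  α ≤ deriv (deriv (fun r : ℝ => pam1 β a (e1 n hn) (r • uhat))) ρ}
            ≥ ENNReal.ofReal (1 - C * Real.exp (-c * m))) := by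
  refine ⟨fun n m hn hm => pam1_ae_second_radial_deriv_pos hβ hn hm, fun c₁ c₂ hc₁ _ => ?_⟩
  refine ⟨1, β * (1 / 100 / (β * c₂ ^ 2 + 1 / 100)) ^ 3, 1 / 4, 1, one_pos, by positivity,
    by norm_num, one_pos, fun n m hn hm _ => ?_⟩
  rw [one_mul]
  exact pam1_second_radial_deriv_ge_whp hβ hc₁ hn hm
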